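/- For the conjugate gradient algorithm, the ratio of consecutive residual norms equals the ratio of the Cholesky entries of the Jacobi matrix: ‖r_n‖₂ / ‖r_{n−1}‖₂ = β_{n−1}/α_{n−1}, where J(ν) = L L^T is the Cholesky factorization of the Jacobi matrix of the VESD ν with diagonal entries α_j and subdiagonal entries β_j of L. -/

import Mathlib

open MeasureTheory Polynomial Matrix

/-- The upper-left `n × n` block of the Jacobi matrix with diagonal `a` and off-diagonal `b`. -/
def jacobiBlock (a b : ℕ → ℝ) (n : ℕ) : Matrix (Fin n) (Fin n) ℝ :=
  Matrix.of fun i j =>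
    if (i : ℕ) = (j : ℕ) then a (i : ℕ)
    else if (i : ℕ) + 1 = (j : ℕ) then b (i : ℕ)
    else if (j : ℕ) + 1 = (i : ℕ) then b (j : ℕ)
    else 0

/-- The `n × n` lower bidiagonal matrix with diagonal `α` and subdiagonal `β`. -/
def cholBlock (α β : ℕ → ℝ) (n : ℕ) : Matrix (Fin n) (Fin n) ℝ :=
  Matrix.of fun i j =>
    if (i : ℕ) = (j : ℕ) then α (i : ℕ)
    else if (j : ℕ) + 1 = (i : ℕ) then β (j : ℕ)
    else 0

/-!
The residual `r_m = b - W x_m` of the `m`-th CG iterate is `f(W) b` for a polynomial `f` of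
degree `≤ m` with `f(0) = 1`, and minimality of the energy norm makes it orthogonal to the Krylov
space `K_m`. Since `⟨f(W) b, g(W) b⟩ = ∫ f g dν`, the vectors `p_k(W) b` are orthonormal, so
expanding `f` in `p_0, …, p_m` all coefficients but the last vanish: `r_m = p_m(W) b / p_m(0)`
and `‖r_m‖ = 1 / |p_m(0)|`. Evaluating the three-term recurrence at `0` and inserting
`a_0 = α_0²`, `a_{k+1} = α_{k+1}² + β_k²`, `b_k = α_k β_k` from `J = L Lᵀ` gives
`β_k p_{k+1}(0) = -α_k p_k(0)`, so `‖r_{n+1}‖ / ‖r_n‖ = |p_n(0)| / |p_{n+1}(0)| = β_n / α_n`.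
-/

lemma integral_sum_smul_dirac {ι : Type*} [Fintype ι] {w : ι → ℝ} (hw : ∀ j, 0 ≤ w j)
    (x : ι → ℝ) (h : ℝ → ℝ) :
    ∫ t, h t ∂(∑ j, ENNReal.ofReal (w j) • Measure.dirac (x j)) = ∑ j, w j * h (x j) := by
  rw [integral_finsetSum_measure fun j _ =>
    (integrable_dirac enorm_lt_top).smul_measure ENNReal.ofReal_ne_top]
  simp [integral_smul_measure, ENNReal.toReal_ofReal (hw _)]

section Spectral

variable {N : ℕ} {W : Matrix (Fin N) (Fin N) ℝ} {q : Fin N → Fin N → ℝ}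

lemma dotProduct_eq_sum_of_orthonormal
    (horth : ∀ i j, q i ⬝ᵥ q j = if i = j then (1 : ℝ) else 0) (u v : Fin N → ℝ) :
    u ⬝ᵥ v = ∑ j, (q j ⬝ᵥ u) * (q j ⬝ᵥ v) := by
  have hQQt : of q * (of q)ᵀ = 1 := by
    ext i j
    rw [mul_apply', one_apply]
    exact horth i j
  calc u ⬝ᵥ v = u ⬝ᵥ ((of q)ᵀ * of q) *ᵥ v := by rw [mul_eq_one_comm.mp hQQt, one_mulVec]
    _ = (of q *ᵥ u) ⬝ᵥ (of q *ᵥ v) := by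
      rw [← mulVec_mulVec, dotProduct_mulVec, vecMul_transpose]
    _ = ∑ j, (q j ⬝ᵥ u) * (q j ⬝ᵥ v) := rfl

lemma vecMul_aeval_of_vecMul_eq {v : Fin N → ℝ} {μ : ℝ} (hv : v ᵥ* W = μ • v) (f : ℝ[X]) :
    v ᵥ* aeval W f = f.eval μ • v := by
  induction f using Polynomial.induction_on with
  | C c => simp [Algebra.algebraMap_eq_smul_one, vecMul_smul]
  | add f g hf hg => simp [vecMul_add, hf, hg, add_smul]
  | monomial k c ih =>
    rw [pow_succ, ← mul_assoc, map_mul, aeval_X, ← vecMul_vecMul, ih, smul_vecMul, hv, smul_smul]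
    simp [mul_assoc]

lemma dotProduct_aeval_mulVec (hW : W.IsSymm) {v : Fin N → ℝ} {μ : ℝ} (hv : W *ᵥ v = μ • v)
    (f : ℝ[X]) (u : Fin N → ℝ) : v ⬝ᵥ aeval W f *ᵥ u = f.eval μ * (v ⬝ᵥ u) := by
  rw [dotProduct_mulVec, vecMul_aeval_of_vecMul_eq (by rwa [← mulVec_transpose, hW.eq]),
    smul_dotProduct, smul_eq_mul]

lemma aeval_mulVec_dotProduct_eq_integral (hW : W.IsSymm) {lam : Fin N → ℝ}
    (heig : ∀ j, W *ᵥ q j = lam j • q j)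
    (horth : ∀ i j, q i ⬝ᵥ q j = if i = j then (1 : ℝ) else 0) {b : Fin N → ℝ} {ν : Measure ℝ}
    (hν : ν = ∑ j, ENNReal.ofReal ((q j ⬝ᵥ b) ^ 2) • Measure.dirac (lam j)) (f g : ℝ[X]) :
    (aeval W f *ᵥ b) ⬝ᵥ (aeval W g *ᵥ b) = ∫ t, f.eval t * g.eval t ∂ν := by
  rw [hν, integral_sum_smul_dirac (fun _ => sq_nonneg _), dotProduct_eq_sum_of_orthonormal horth]
  refine Finset.sum_congr rfl fun j _ => ?_
  rw [dotProduct_aeval_mulVec hW (heig j), dotProduct_aeval_mulVec hW (heig j)]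
  ring

end Spectral

section Krylov

variable {N : ℕ} (W : Matrix (Fin N) (Fin N) ℝ) (b : Fin N → ℝ)

noncomputable def aevalMulVec : ℝ[X] →ₗ[ℝ] (Fin N → ℝ) where
  toFun f := aeval W f *ᵥ b
  map_add' f g := by simp [add_mulVec]
  map_smul' c f := by simp [smul_mulVec]

@[simp]
lemma aevalMulVec_apply (f : ℝ[X]) : aevalMulVec W b f = aeval W f *ᵥ b := rfl

lemma span_pow_mulVec_eq_map_degreeLT (m : ℕ) :
    Submodule.span ℝ {v | ∃ k < m, v = (W ^ k) *ᵥ b} = (degreeLT ℝ m).map (aevalMulVec W b) := by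
  classical
  rw [degreeLT_eq_span_X_pow, Submodule.map_span]
  congr 1
  ext v
  simp [eq_comm]

end Krylov

lemma Matrix.IsSymm.dotProduct_mulVec_comm {N : ℕ} {W : Matrix (Fin N) (Fin N) ℝ}
    (hW : W.IsSymm) (u v : Fin N → ℝ) : u ⬝ᵥ W *ᵥ v = W *ᵥ u ⬝ᵥ v := by
  rw [dotProduct_mulVec, ← mulVec_transpose, hW.eq]

lemma mulVec_sub_dotProduct_eq_zero_of_forall_le {N : ℕ} {W : Matrix (Fin N) (Fin N) ℝ}
    (hW : W.IsSymm) {K : Submodule ℝ (Fin N → ℝ)} {x xm : Fin N → ℝ} (hxm : xm ∈ K)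
    (hmin : ∀ y ∈ K, (x - xm) ⬝ᵥ W *ᵥ (x - xm) ≤ (x - y) ⬝ᵥ W *ᵥ (x - y))
    {u : Fin N → ℝ} (hu : u ∈ K) : W *ᵥ (x - xm) ⬝ᵥ u = 0 := by
  obtain ⟨e, rfl⟩ : ∃ e, x = xm + e := ⟨x - xm, by abel⟩
  rw [add_sub_cancel_left] at hmin ⊢
  have hquad : ∀ t : ℝ, 0 ≤ (u ⬝ᵥ W *ᵥ u) * (t * t) + (-2 * (W *ᵥ e ⬝ᵥ u)) * t + 0 := by
    intro t
    have h := hmin (xm + t • u) (K.add_mem hxm (K.smul_mem t hu))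
    rw [add_sub_add_left_eq_sub] at h
    simp only [mulVec_sub, mulVec_smul, sub_dotProduct, dotProduct_sub, smul_dotProduct,
      dotProduct_smul, smul_eq_mul, hW.dotProduct_mulVec_comm e, dotProduct_comm u (W *ᵥ e)] at h
    linarith
  have hdisc := discrim_le_zero hquad
  rw [discrim] at hdisc
  nlinarith [sq_nonneg (W *ᵥ e ⬝ᵥ u)]

section Expansion

variable {p : ℕ → ℝ[X]} {m : ℕ} (hdeg : ∀ k ≤ m, (p k).natDegree = k) (hp : ∀ k ≤ m, p k ≠ 0)
include hdeg hp

lemma exists_sum_smul_eq_of_mem_degreeLE {f : ℝ[X]} (hf : f ∈ degreeLE ℝ m) :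
    ∃ c : Fin (m + 1) → ℝ, ∑ i, c i • p i = f := by
  -- `p` padded by `X ^ k` beyond `m` to a polynomial sequence
  let S : Polynomial.Sequence ℝ :=
    ⟨fun k => if k ≤ m then p k else X ^ k, fun k => by
      split_ifs with hk
      · rw [degree_eq_natDegree (hp k hk), hdeg k hk]
      · simp⟩
  have hS : ∀ k ≤ m, S k = p k := fun k hk => if_pos hk
  have hrange : S '' Set.Iic m = Set.range fun i : Fin (m + 1) => p i := by
    ext g
    constructor
    · rintro ⟨k, hk, rfl⟩
      exact ⟨⟨k, Nat.lt_succ_of_le hk⟩, (hS k hk).symm⟩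
    · rintro ⟨i, rfl⟩
      exact ⟨i, Nat.le_of_lt_succ i.2, hS i (Nat.le_of_lt_succ i.2)⟩
  have hunit : ∀ k ≤ m, IsUnit (S k).leadingCoeff := fun k hk => by
    rw [hS k hk]
    exact (leadingCoeff_ne_zero.mpr (hp k hk)).isUnit
  rwa [← S.span_degreeLE hunit, hrange, Submodule.mem_span_range_iff_exists_fun] at hf

lemma eq_smul_of_forall_dotProduct_eq_zero {ι : Type*} [Fintype ι] (φ : ℝ[X] →ₗ[ℝ] (ι → ℝ))
    (horth : ∀ k ≤ m, ∀ l ≤ m, φ (p k) ⬝ᵥ φ (p l) = if k = l then (1 : ℝ) else 0)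
    {f : ℝ[X]} (hf : f ∈ degreeLE ℝ m) (hperp : ∀ k < m, φ f ⬝ᵥ φ (p k) = 0) :
    f = (φ f ⬝ᵥ φ (p m)) • p m := by
  obtain ⟨c, rfl⟩ := exists_sum_smul_eq_of_mem_degreeLE hdeg hp hf
  have hcoeff : ∀ k : Fin (m + 1), φ (∑ i, c i • p i) ⬝ᵥ φ (p k) = c k := by
    intro k
    simp only [map_sum, map_smul, sum_dotProduct, smul_dotProduct,
      horth _ (Nat.le_of_lt_succ (Fin.is_lt _)) _ (Nat.le_of_lt_succ k.2), smul_eq_mul, mul_ite,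
      mul_one, mul_zero, Fin.val_inj, Finset.sum_ite_eq', Finset.mem_univ, if_true]
  have hlow : ∀ i : Fin m, c i.castSucc = 0 := fun i =>
    (hcoeff i.castSucc).symm.trans (hperp i i.2)
  have hlast := hcoeff (Fin.last m)
  rw [Fin.val_last] at hlast
  rw [hlast, Fin.sum_univ_castSucc]
  simp [hlow]

end Expansion

section Cholesky

variable (α β : ℕ → ℝ) {m : ℕ}

lemma cholBlock_mul_transpose_apply_zero_zero (h : 0 < m) :
    (cholBlock α β m * (cholBlock α β m)ᵀ) ⟨0, h⟩ ⟨0, h⟩ = α 0 ^ 2 := by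
  rw [mul_apply, Finset.sum_eq_single ⟨0, h⟩ (fun k _ hk => ?_) (by simp)]
  · simp [cholBlock, sq]
  · simp only [ne_eq, Fin.ext_iff] at hk
    simp only [cholBlock, transpose_apply, of_apply]
    split_ifs <;> first | omega | contradiction | simp

lemma cholBlock_mul_transpose_apply_succ_self {i : ℕ} (h : i + 1 < m) :
    (cholBlock α β m * (cholBlock α β m)ᵀ) ⟨i + 1, h⟩ ⟨i + 1, h⟩ = α (i + 1) ^ 2 + β i ^ 2 := by
  rw [mul_apply, Finset.sum_eq_add_of_mem ⟨i + 1, h⟩ ⟨i, by omega⟩ (Finset.mem_univ _)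
    (Finset.mem_univ _) (by simp [Fin.ext_iff]) (fun k _ hk => ?_)]
  · simp [cholBlock, sq]
  · simp only [ne_eq, Fin.ext_iff] at hk
    simp only [cholBlock, transpose_apply, of_apply]
    split_ifs <;> first | omega | contradiction | simp

lemma cholBlock_mul_transpose_apply_succ {i : ℕ} (h : i + 1 < m) :
    (cholBlock α β m * (cholBlock α β m)ᵀ) ⟨i + 1, h⟩ ⟨i, by omega⟩ = α i * β i := by
  rw [mul_apply, Finset.sum_eq_single ⟨i, by omega⟩ (fun k _ hk => ?_) (by simp)]
  · simp [cholBlock, mul_comm]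
  · simp only [ne_eq, Fin.ext_iff] at hk
    simp only [cholBlock, transpose_apply, of_apply]
    split_ifs <;> first | omega | contradiction | simp

end Cholesky

section Jacobi
variable {a b α β : ℕ → ℝ} (hchol : ∀ m, jacobiBlock a b m = cholBlock α β m * (cholBlock α β m)ᵀ)
include hchol

lemma jacobi_zero_eq_of_cholesky : a 0 = α 0 ^ 2 := by
  simpa [jacobiBlock] using
    (congrFun (congrFun (hchol 1) 0) 0).trans (cholBlock_mul_transpose_apply_zero_zero α β _)

lemma jacobi_succ_eq_of_cholesky (i : ℕ) : a (i + 1) = α (i + 1) ^ 2 + β i ^ 2 := by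
  simpa [jacobiBlock] using
    (congrFun (congrFun (hchol (i + 2)) ⟨i + 1, by omega⟩) ⟨i + 1, by omega⟩).trans
      (cholBlock_mul_transpose_apply_succ_self α β (by omega))

lemma jacobi_offDiag_eq_of_cholesky (i : ℕ) : b i = α i * β i := by
  have h := (congrFun (congrFun (hchol (i + 2)) ⟨i + 1, by omega⟩) ⟨i, by omega⟩).trans
    (cholBlock_mul_transpose_apply_succ α β (by omega))
  simp only [jacobiBlock, of_apply] at h
  rw [if_neg (by omega), if_neg (by omega)] at h
  simpa using h

lemma cholesky_mul_eval_zero_succ {p : ℕ → ℝ[X]} {n : ℕ} (hα : ∀ j, 0 < α j)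
    (hrec : ∀ k ≤ n, X * p k =
      C (a k) * p k + C (b k) * p (k + 1) + (if k = 0 then 0 else C (b (k - 1)) * p (k - 1)))
    {k : ℕ} (hk : k ≤ n) : β k * (p (k + 1)).eval 0 = -(α k * (p k).eval 0) := by
  induction k with
  | zero =>
    have h := congrArg (eval 0) (hrec 0 hk)
    simp only [eval_mul, eval_add, eval_X, eval_C, if_pos, eval_zero] at h
    apply mul_left_cancel₀ (hα 0).ne'
    linear_combination -h - (p 0).eval 0 * jacobi_zero_eq_of_cholesky hchol
      - (p 1).eval 0 * jacobi_offDiag_eq_of_cholesky hchol 0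
  | succ k ih =>
    have h := congrArg (eval 0) (hrec (k + 1) hk)
    simp only [eval_mul, eval_add, eval_X, eval_C, if_neg k.succ_ne_zero,
      Nat.add_sub_cancel] at h
    apply mul_left_cancel₀ (hα (k + 1)).ne'
    linear_combination -h - (p (k + 1)).eval 0 * jacobi_succ_eq_of_cholesky hchol k
      - (p (k + 2)).eval 0 * jacobi_offDiag_eq_of_cholesky hchol (k + 1)
      - (p k).eval 0 * jacobi_offDiag_eq_of_cholesky hchol k - β k * ih (by omega)

end Jacobi

lemma sqrt_residual_mul_abs_eval_zero {N : ℕ} {W : Matrix (Fin N) (Fin N) ℝ} (hW : W.IsSymm)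
    {b x : Fin N → ℝ} (hx : W *ᵥ x = b) {p : ℕ → ℝ[X]} {m : ℕ}
    (hdeg : ∀ k ≤ m, (p k).natDegree = k) (hp : ∀ k ≤ m, p k ≠ 0)
    (horth : ∀ k ≤ m, ∀ l ≤ m,
      (aeval W (p k) *ᵥ b) ⬝ᵥ (aeval W (p l) *ᵥ b) = if k = l then (1 : ℝ) else 0)
    {xm : Fin N → ℝ} (hxm : xm ∈ Submodule.span ℝ {v | ∃ k < m, v = (W ^ k) *ᵥ b})
    (hmin : ∀ y ∈ Submodule.span ℝ {v | ∃ k < m, v = (W ^ k) *ᵥ b},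
      (x - xm) ⬝ᵥ W *ᵥ (x - xm) ≤ (x - y) ⬝ᵥ W *ᵥ (x - y)) :
    Real.sqrt ((b - W *ᵥ xm) ⬝ᵥ (b - W *ᵥ xm)) * |(p m).eval 0| = 1 := by
  set φ := aevalMulVec W b
  rw [span_pow_mulVec_eq_map_degreeLT] at hxm hmin
  obtain ⟨g, hg, rfl⟩ := hxm
  set f : ℝ[X] := 1 - X * g
  have hres : b - W *ᵥ φ g = φ f := by
    simp [φ, f, sub_mulVec, mulVec_mulVec]
  have hf : f ∈ degreeLE ℝ m := by
    refine mem_degreeLE.mpr ((degree_sub_le _ _).trans (max_le ?_ ?_))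
    · exact degree_one_le.trans (by exact_mod_cast m.zero_le)
    · rw [X_mul, degree_mul_X]
      exact Nat.WithBot.add_one_le_of_lt (mem_degreeLT.mp hg)
  have hperp : ∀ k < m, φ f ⬝ᵥ φ (p k) = 0 := fun k hk => by
    have hpk : p k ∈ degreeLT ℝ m := by
      rw [mem_degreeLT, degree_eq_natDegree (hp k hk.le), hdeg k hk.le]
      exact_mod_cast hk
    rw [← hres, ← hx, ← mulVec_sub]
    exact mulVec_sub_dotProduct_eq_zero_of_forall_le hW (Submodule.mem_map_of_mem hg) hmin
      (Submodule.mem_map_of_mem hpk)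
  have hf_eq := eq_smul_of_forall_dotProduct_eq_zero hdeg hp φ horth hf hperp
  set t := φ f ⬝ᵥ φ (p m)
  have ht : t * (p m).eval 0 = 1 := by
    simpa [f] using (congrArg (eval 0) hf_eq).symm
  have hnorm : φ f ⬝ᵥ φ f = t ^ 2 := by
    rw [hf_eq, map_smul, smul_dotProduct, dotProduct_smul]
    simp [φ, horth m le_rfl m le_rfl, sq]
  rw [hres, hnorm, Real.sqrt_sq_eq_abs, ← abs_mul, ht, abs_one]

theorem stmt9_general
    (N : ℕ) (W : Matrix (Fin N) (Fin N) ℝ)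
    (hWsym : W.IsSymm)
    (bvec : Fin N → ℝ)
    (lam : Fin N → ℝ) (q : Fin N → Fin N → ℝ)
    (heig : ∀ j, W.mulVec (q j) = lam j • q j)
    (horthq : ∀ i j, q i ⬝ᵥ q j = if i = j then (1 : ℝ) else 0)
    (ν : Measure ℝ)
    (hν : ν = ∑ j : Fin N, (ENNReal.ofReal ((q j ⬝ᵥ bvec) ^ 2)) • Measure.dirac (lam j))
    (n : ℕ)
    -- orthonormal polynomials `p` of `ν` with recurrence coefficients `a`, `b'`
    (p : ℕ → Polynomial ℝ) (a b' : ℕ → ℝ)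
    (hdeg : ∀ k ≤ n + 1, (p k).natDegree = k)
    (hlead : ∀ k ≤ n + 1, 0 < (p k).leadingCoeff)
    (horthp : ∀ k ≤ n + 1, ∀ m ≤ n + 1, k ≠ m → ∫ t, (p k).eval t * (p m).eval t ∂ν = 0)
    (hnorm : ∀ k ≤ n + 1, ∫ t, (p k).eval t ^ 2 ∂ν = 1)
    (hbpos : ∀ k ≤ n, 0 < b' k)
    (hrec : ∀ k ≤ n, Polynomial.X * p k =
      Polynomial.C (a k) * p k + Polynomial.C (b' k) * p (k + 1) +
        (if k = 0 then 0 else Polynomial.C (b' (k - 1)) * p (k - 1)))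
    -- Cholesky factorization of the Jacobi matrix: `J_m(ν) = L_m L_mᵀ` for every block size
    (α β : ℕ → ℝ) (hα : ∀ j, 0 < α j)
    (hchol : ∀ m, jacobiBlock a b' m = cholBlock α β m * (cholBlock α β m)ᵀ)
    -- the CG iterates at steps `n` and `n+1`
    (x xn xn1 : Fin N → ℝ)
    (hx : W.mulVec x = bvec)
    (hxnmem : xn ∈ Submodule.span ℝ {v : Fin N → ℝ | ∃ k < n, v = (W ^ k).mulVec bvec})
    (hxnmin : ∀ y ∈ Submodule.span ℝ {v : Fin N → ℝ | ∃ k < n, v = (W ^ k).mulVec bvec},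
      (x - xn) ⬝ᵥ W.mulVec (x - xn) ≤ (x - y) ⬝ᵥ W.mulVec (x - y))
    (hxn1mem : xn1 ∈ Submodule.span ℝ {v : Fin N → ℝ | ∃ k < n + 1, v = (W ^ k).mulVec bvec})
    (hxn1min : ∀ y ∈ Submodule.span ℝ {v : Fin N → ℝ | ∃ k < n + 1, v = (W ^ k).mulVec bvec},
      (x - xn1) ⬝ᵥ W.mulVec (x - xn1) ≤ (x - y) ⬝ᵥ W.mulVec (x - y)) :
    Real.sqrt ((bvec - W.mulVec xn1) ⬝ᵥ (bvec - W.mulVec xn1)) /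
        Real.sqrt ((bvec - W.mulVec xn) ⬝ᵥ (bvec - W.mulVec xn)) =
      β n / α n := by
  have horth : ∀ k ≤ n + 1, ∀ l ≤ n + 1,
      (aeval W (p k) *ᵥ bvec) ⬝ᵥ (aeval W (p l) *ᵥ bvec) = if k = l then (1 : ℝ) else 0 := by
    intro k hk l hl
    rw [aeval_mulVec_dotProduct_eq_integral hWsym heig horthq hν]
    split_ifs with hkl
    · simpa [hkl, sq] using hnorm l hl
    · exact horthp k hk l hl hkl
  have hres {m : ℕ} (hm : m ≤ n + 1) (xm : Fin N → ℝ) :=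
    sqrt_residual_mul_abs_eval_zero (xm := xm) hWsym hx (fun k hk => hdeg k (hk.trans hm))
      (fun k hk => leadingCoeff_ne_zero.mp (hlead k (hk.trans hm)).ne')
      (fun k hk l hl => horth k (hk.trans hm) l (hl.trans hm))
  have hresn := hres n.le_succ xn hxnmem hxnmin
  have hresn1 := hres le_rfl xn1 hxn1mem hxn1min
  have hβ : 0 < β n := pos_of_mul_pos_right
    (jacobi_offDiag_eq_of_cholesky hchol n ▸ hbpos n le_rfl) (hα n).le
  have hratio := congrArg abs (cholesky_mul_eval_zero_succ hchol hα hrec le_rfl)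
  rw [abs_mul, abs_neg, abs_mul, abs_of_pos hβ, abs_of_pos (hα n)] at hratio
  set rn := Real.sqrt ((bvec - W.mulVec xn) ⬝ᵥ (bvec - W.mulVec xn))
  set rn1 := Real.sqrt ((bvec - W.mulVec xn1) ⬝ᵥ (bvec - W.mulVec xn1))
  rw [div_eq_div_iff (left_ne_zero_of_mul_eq_one hresn) (hα n).ne']
  linear_combination (-(rn1 * α n)) * hresn + (rn * β n) * hresn1 - (rn * rn1) * hratio

/-- for the conjugate gradient algorithm, the ratio of consecutive residual
norms equals the ratio of Cholesky entries of the Jacobi matrix of the VESD `ν`: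
`‖r_{n+1}‖₂ / ‖r_n‖₂ = β_n / α_n`, where `J(ν) = L Lᵀ` with `L` lower bidiagonal having
diagonal `α_j > 0` and subdiagonal `β_j`. -/
theorem stmt9
    (N : ℕ) (W : Matrix (Fin N) (Fin N) ℝ)
    (hWsym : W.IsSymm) (hWpd : W.PosDef)
    (bvec : Fin N → ℝ) (hb : bvec ⬝ᵥ bvec = 1)
    (lam : Fin N → ℝ) (q : Fin N → Fin N → ℝ)
    (heig : ∀ j, W.mulVec (q j) = lam j • q j)
    (horthq : ∀ i j, q i ⬝ᵥ q j = if i = j then (1 : ℝ) else 0)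
    (ν : Measure ℝ)
    (hν : ν = ∑ j : Fin N, (ENNReal.ofReal ((q j ⬝ᵥ bvec) ^ 2)) • Measure.dirac (lam j))
    (n : ℕ)
    (hatoms : ∃ t : Finset ℝ, n + 2 ≤ t.card ∧ ∀ x ∈ t, ν {x} ≠ 0)
    -- orthonormal polynomials `p` of `ν` with recurrence coefficients `a`, `b'`
    (p : ℕ → Polynomial ℝ) (a b' : ℕ → ℝ)
    (hdeg : ∀ k ≤ n + 1, (p k).natDegree = k)
    (hlead : ∀ k ≤ n + 1, 0 < (p k).leadingCoeff)
    (horthp : ∀ k ≤ n + 1, ∀ m ≤ n + 1, k ≠ m → ∫ t, (p k).eval t * (p m).eval t ∂ν = 0)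
    (hnorm : ∀ k ≤ n + 1, ∫ t, (p k).eval t ^ 2 ∂ν = 1)
    (hbpos : ∀ k ≤ n, 0 < b' k)
    (hrec : ∀ k ≤ n, Polynomial.X * p k =
      Polynomial.C (a k) * p k + Polynomial.C (b' k) * p (k + 1) +
        (if k = 0 then 0 else Polynomial.C (b' (k - 1)) * p (k - 1)))
    -- Cholesky factorization of the Jacobi matrix: `J_m(ν) = L_m L_mᵀ` for every block size
    (α β : ℕ → ℝ) (hα : ∀ j, 0 < α j)
    (hchol : ∀ m, jacobiBlock a b' m = cholBlock α β m * (cholBlock α β m)ᵀ)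
    -- the CG iterates at steps `n` and `n+1`
    (x xn xn1 : Fin N → ℝ)
    (hx : W.mulVec x = bvec)
    (hxnmem : xn ∈ Submodule.span ℝ {v : Fin N → ℝ | ∃ k < n, v = (W ^ k).mulVec bvec})
    (hxnmin : ∀ y ∈ Submodule.span ℝ {v : Fin N → ℝ | ∃ k < n, v = (W ^ k).mulVec bvec},
      (x - xn) ⬝ᵥ W.mulVec (x - xn) ≤ (x - y) ⬝ᵥ W.mulVec (x - y))
    (hxn1mem : xn1 ∈ Submodule.span ℝ {v : Fin N → ℝ | ∃ k < n + 1, v = (W ^ k).mulVec bvec})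
    (hxn1min : ∀ y ∈ Submodule.span ℝ {v : Fin N → ℝ | ∃ k < n + 1, v = (W ^ k).mulVec bvec},
      (x - xn1) ⬝ᵥ W.mulVec (x - xn1) ≤ (x - y) ⬝ᵥ W.mulVec (x - y)) :
    Real.sqrt ((bvec - W.mulVec xn1) ⬝ᵥ (bvec - W.mulVec xn1)) /
        Real.sqrt ((bvec - W.mulVec xn) ⬝ᵥ (bvec - W.mulVec xn)) =
      β n / α n :=
  stmt9_general N W hWsym bvec lam q heig horthq ν hν n p a b' hdeg hlead horthp hnorm hbpos hrec α
    β hα hchol x xn xn1 hx hxnmem hxnmin hxn1mem hxn1min
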